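/- If f : Σ* → Γ* is realized by some bimachine (with complete total left and right automata and total output functions), then f is realized by a functional finite-state transducer; concretely, the product-like transducer whose states are pairs (l, r) of states of the left and right automata, with transitions ((l, σ·_R r), σ, (l ·_L σ, r)) outputting ω(l, σ, r), is unambiguous on each input and realizes f. -/
import Mathlib


/-- Left action of words on states of the left automaton. -/
def actL {L A : Type*} (δL : L → A → L) (l : L) (w : List A) : L :=
  w.foldl δL l

/-- Right action of words on states of the right automaton. -/
def actR {R A : Type*} (δR : A → R → R) (w : List A) (r : R) : R :=
  w.foldr δR r

/-- The extension of the bimachine output function to words. -/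
def bigOmega {L R A Γ : Type*} (δL : L → A → L) (δR : A → R → R)
    (ω : L → A → R → List Γ) (l : L) : List A → R → List Γ
  | [], _ => []
  | a :: w, r => ω l a (actR δR w r) ++ bigOmega δL δR ω (δL l a) w r

/-- The function realized by a bimachine. -/
def bimRealize {L R A Γ : Type*} (δL : L → A → L) (δR : A → R → R)
    (lam : R → List Γ) (ω : L → A → R → List Γ) (ρ : L → List Γ)
    (li : L) (rf : R) (w : List A) : List Γ :=
  lam (actR δR w rf) ++ bigOmega δL δR ω li w rf ++ ρ (actL δL li w)

/-- Runs of the product transducer with states L × R: a transition on σ goes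
from (l, σ ·_R r) to (l ·_L σ, r) and outputs ω(l, σ, r).
`runOut δL δR ω p w q o` holds iff there is a run of the transducer on w from
state p to state q producing output o. -/
def runOut {L R A Γ : Type*} (δL : L → A → L) (δR : A → R → R)
    (ω : L → A → R → List Γ) (p : L × R) :
    List A → (L × R) → List Γ → Prop
  | [], q, o => q = p ∧ o = []
  | a :: w, q, o =>
      ∃ (r : R) (o' : List Γ),
        p.2 = δR a r ∧
        runOut δL δR ω (δL p.1 a, r) w q o' ∧
        o = ω p.1 a r ++ o'

lemma runOut_exists {L R A Γ : Type*} (δL : L → A → L) (δR : A → R → R)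
    (ω : L → A → R → List Γ) :
    ∀ (w : List A) (l : L) (r : R),
      runOut δL δR ω (l, actR δR w r) w (actL δL l w, r) (bigOmega δL δR ω l w r) := by
  intro w
  induction w with
  | nil => intro l r; exact ⟨rfl, rfl⟩
  | cons a w ih =>
      intro l r
      exact ⟨actR δR w r, bigOmega δL δR ω (δL l a) w r, rfl, ih (δL l a) r, rfl⟩

lemma runOut_det {L R A Γ : Type*} (δL : L → A → L) (δR : A → R → R)
    (ω : L → A → R → List Γ) :
    ∀ (w : List A) (p q : L × R) (o : List Γ), runOut δL δR ω p w q o →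
      p.2 = actR δR w q.2 ∧ q.1 = actL δL p.1 w ∧ o = bigOmega δL δR ω p.1 w q.2 := by
  intro w
  induction w with
  | nil =>
      intro p q o h
      obtain ⟨hq, ho⟩ := h
      subst hq; exact ⟨rfl, rfl, ho⟩
  | cons a w ih =>
      intro p q o h
      obtain ⟨r, o', hr, hrun, ho⟩ := h
      obtain ⟨h1, h2, h3⟩ := ih _ _ _ hrun
      simp only at h1 h2 h3
      refine ⟨?_, h2, ?_⟩
      · simp only [actR, List.foldr_cons]
        rw [hr, h1]; rfl
      · rw [ho, h3]
        have : r = actR δR w q.2 := h1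
        rw [this]; rfl

/-- The product-like transducer built from a bimachine (states are pairs (l,r),
initial states (l_i, r) with initial output λ(r), final states (l, r_f) with
final output ρ(l)) is unambiguous: each input admits exactly one accepting run;
and it realizes the function of the bimachine. -/
theorem bimachine_to_unambiguous_transducer {L R A Γ : Type*}
    (δL : L → A → L) (δR : A → R → R)
    (lam : R → List Γ) (ω : L → A → R → List Γ) (ρ : L → List Γ)
    (li : L) (rf : R) :
    (∀ w : List A, ∃! t : R × (L × R) × List Γ,
        runOut δL δR ω (li, t.1) w t.2.1 t.2.2 ∧ t.2.1.2 = rf) ∧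
    (∀ (w : List A) (r₀ : R) (q : L × R) (o : List Γ),
        runOut δL δR ω (li, r₀) w q o → q.2 = rf →
          lam r₀ ++ o ++ ρ q.1 = bimRealize δL δR lam ω ρ li rf w) := by
  constructor
  · intro w
    refine ⟨(actR δR w rf, (actL δL li w, rf), bigOmega δL δR ω li w rf),
      ⟨runOut_exists δL δR ω w li rf, rfl⟩, ?_⟩
    rintro ⟨r₀, q, o⟩ ⟨hrun, hq2⟩
    obtain ⟨h1, h2, h3⟩ := runOut_det δL δR ω w _ _ _ hrun
    simp only at h1 h2 h3 hq2
    rw [hq2] at h1 h3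
    simp [h1, h3, Prod.ext_iff, h2, hq2]
  · intro w r₀ q o hrun hq2
    obtain ⟨h1, h2, h3⟩ := runOut_det δL δR ω w _ _ _ hrun
    simp only at h1 h2 h3
    rw [hq2] at h1 h3
    rw [h1, h3, h2]; rfl
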